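/- Let R be a discrete valuation ring with maximal ideal m whose residue field F = R/m is finite of odd cardinality, and let M ∈ Mat₂(R) be a matrix whose determinant has valuation exactly 1 (det M ∈ m, det M ∉ m²). Consider the finite set Ξ(M) = {B ∈ Mat₂(F) : B_{ij}² = M̄_{ij} for all 1 ≤ i,j ≤ 2, and det B = 0}. If all four entries of M are units of R, then 2·card(Ξ(M)) = ∏_{1≤i,j≤2}(1 + χ(M̄_{ij})); otherwise card(Ξ(M)) = ∏_{1≤i,j≤2}(1 + χ(M̄_{ij})). -/

import Mathlib

/-!
With `A = M̄` we have `det A = 0`, and `Ξ(M)` is the set of singular entrywise square roots of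
`A`. There are `∏ (1 + χ(Aᵢⱼ))` entrywise square roots in all. If some
`Aᵢⱼ` vanishes, both products `A₀₀A₁₁ = A₀₁A₁₀` vanish, so every root is singular. If no entry
vanishes, `(B₀₀B₁₁)² = (B₀₁B₁₀)² ≠ 0` forces `B₀₀B₁₁ = ±B₀₁B₁₀`, and negating `B₀₀` swaps the two
signs; this involution pairs the singular roots with the nonsingular ones.
-/

open Finset IsLocalRing

namespace Matrix

section NegTopLeft

variable {R : Type*} [CommRing R]

def negTopLeft (B : Matrix (Fin 2) (Fin 2) R) : Matrix (Fin 2) (Fin 2) R :=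
  !![-B 0 0, B 0 1; B 1 0, B 1 1]

@[simp]
lemma negTopLeft_negTopLeft (B : Matrix (Fin 2) (Fin 2) R) :
    B.negTopLeft.negTopLeft = B := by
  ext i j; fin_cases i <;> fin_cases j <;> simp [negTopLeft]

lemma det_negTopLeft (B : Matrix (Fin 2) (Fin 2) R) :
    B.negTopLeft.det = -(B 0 0 * B 1 1) - B 0 1 * B 1 0 := by
  simp [negTopLeft, det_fin_two_of]

lemma negTopLeft_apply_sq (B : Matrix (Fin 2) (Fin 2) R) (i j : Fin 2) :
    B.negTopLeft i j ^ 2 = B i j ^ 2 := by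
  fin_cases i <;> fin_cases j <;> simp [negTopLeft]

end NegTopLeft

section EntrywiseSqrts

variable {F : Type*} [Field F] [Fintype F] [DecidableEq F]
  {m n : Type*} [Fintype m] [DecidableEq m] [Fintype n] [DecidableEq n]

def entrywiseSqrts (A : Matrix m n F) : Finset (Matrix m n F) :=
  (Fintype.piFinset fun i => Fintype.piFinset fun j => {x : F | x ^ 2 = A i j}.toFinset).map
    Matrix.of.toEmbedding

lemma mem_entrywiseSqrts {A B : Matrix m n F} :
    B ∈ A.entrywiseSqrts ↔ ∀ i j, B i j ^ 2 = A i j := by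
  simp [entrywiseSqrts]

lemma card_entrywiseSqrts (hF : ringChar F ≠ 2) (A : Matrix m n F) :
    (#A.entrywiseSqrts : ℤ) = ∏ i, ∏ j, (1 + quadraticChar F (A i j)) := by
  simp only [entrywiseSqrts, card_map, Fintype.card_piFinset, Nat.cast_prod,
    quadraticChar_card_sqrts hF, add_comm]

variable {A B : Matrix (Fin 2) (Fin 2) F}

lemma negTopLeft_mem_entrywiseSqrts (hB : B ∈ A.entrywiseSqrts) :
    B.negTopLeft ∈ A.entrywiseSqrts := by
  simpa only [mem_entrywiseSqrts, negTopLeft_apply_sq] using hB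

lemma sq_mul_diag_eq_sq_mul_antidiag (hA : A.det = 0) (hB : B ∈ A.entrywiseSqrts) :
    (B 0 0 * B 1 1) ^ 2 = (B 0 1 * B 1 0) ^ 2 := by
  rw [mem_entrywiseSqrts] at hB
  rw [det_fin_two] at hA
  rw [mul_pow, mul_pow, hB, hB, hB, hB]
  linear_combination hA

lemma filter_det_eq_zero_entrywiseSqrts_of_apply_eq_zero (hA : A.det = 0) {i j : Fin 2}
    (hij : A i j = 0) : {B ∈ A.entrywiseSqrts | B.det = 0} = A.entrywiseSqrts := by
  refine filter_true_of_mem fun B hB => ?_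
  have hA' := hA
  rw [det_fin_two, sub_eq_zero] at hA'
  have hdiag : A 0 0 * A 1 1 = 0 := by
    fin_cases i <;> fin_cases j <;> simp_all
  have hB' := mem_entrywiseSqrts.mp hB
  have hx : B 0 0 * B 1 1 = 0 := pow_eq_zero_iff two_ne_zero |>.mp <| by
    rw [mul_pow, hB', hB', hdiag]
  have hy : B 0 1 * B 1 0 = 0 := pow_eq_zero_iff two_ne_zero |>.mp <| by
    rw [← sq_mul_diag_eq_sq_mul_antidiag hA hB, hx, zero_pow two_ne_zero]
  rw [det_fin_two, hx, hy, sub_zero]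

lemma det_eq_zero_iff_det_negTopLeft_ne_zero (hF : ringChar F ≠ 2) (hA : A.det = 0)
    (hA0 : ∀ i j, A i j ≠ 0) (hB : B ∈ A.entrywiseSqrts) :
    B.det = 0 ↔ B.negTopLeft.det ≠ 0 := by
  have hsq := sq_mul_diag_eq_sq_mul_antidiag hA hB
  have hx : B 0 0 * B 1 1 ≠ 0 := by
    have hB' := mem_entrywiseSqrts.mp hB
    refine (pow_ne_zero_iff two_ne_zero).mp ?_
    rw [mul_pow, hB', hB']
    exact mul_ne_zero (hA0 0 0) (hA0 1 1)
  rw [det_negTopLeft, det_fin_two]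
  constructor
  · intro hdet hneg
    exact mul_ne_zero (Ring.two_ne_zero hF) hx (by linear_combination hdet - hneg)
  · intro hneg
    have : (B 0 0 * B 1 1 - B 0 1 * B 1 0) * (-(B 0 0 * B 1 1) - B 0 1 * B 1 0) = 0 := by
      linear_combination -hsq
    exact (mul_eq_zero.mp this).resolve_right hneg

lemma two_mul_card_filter_det_eq_zero_entrywiseSqrts (hF : ringChar F ≠ 2)
    (hA : A.det = 0) (hA0 : ∀ i j, A i j ≠ 0) :
    2 * #{B ∈ A.entrywiseSqrts | B.det = 0} = #A.entrywiseSqrts := by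
  have hswap : #{B ∈ A.entrywiseSqrts | B.det = 0} = #{B ∈ A.entrywiseSqrts | B.det ≠ 0} := by
    refine card_nbij' negTopLeft negTopLeft ?_ ?_
      (fun B _ => negTopLeft_negTopLeft B) (fun B _ => negTopLeft_negTopLeft B)
    · intro B hB
      simp only [coe_filter, Set.mem_ofPred_eq] at hB ⊢
      exact ⟨negTopLeft_mem_entrywiseSqrts hB.1,
        (det_eq_zero_iff_det_negTopLeft_ne_zero hF hA hA0 hB.1).mp hB.2⟩
    · intro B hB
      simp only [coe_filter, Set.mem_ofPred_eq] at hB ⊢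
      refine ⟨negTopLeft_mem_entrywiseSqrts hB.1, ?_⟩
      rw [det_eq_zero_iff_det_negTopLeft_ne_zero hF hA hA0 (negTopLeft_mem_entrywiseSqrts hB.1),
        negTopLeft_negTopLeft]
      exact hB.2
  rw [two_mul]
  nth_rw 2 [hswap]
  exact card_filter_add_card_filter_not _

end EntrywiseSqrts

end Matrix

theorem stmt_0 (R : Type*) [CommRing R] [IsDomain R] [IsDiscreteValuationRing R]
    [Fintype (IsLocalRing.ResidueField R)] [DecidableEq (IsLocalRing.ResidueField R)]
    (hodd : Odd (Fintype.card (IsLocalRing.ResidueField R)))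
    (M : Matrix (Fin 2) (Fin 2) R)
    (h1 : M.det ∈ IsLocalRing.maximalIdeal R) :
    ((∀ i j, IsUnit (M i j)) →
      2 * ({B : Matrix (Fin 2) (Fin 2) (IsLocalRing.ResidueField R) |
            (∀ i j, B i j ^ 2 = IsLocalRing.residue R (M i j)) ∧ B.det = 0}.ncard : ℤ) =
        ∏ i : Fin 2, ∏ j : Fin 2,
          (1 + quadraticChar (IsLocalRing.ResidueField R) (IsLocalRing.residue R (M i j)))) ∧
    ((¬ ∀ i j, IsUnit (M i j)) →
      ({B : Matrix (Fin 2) (Fin 2) (IsLocalRing.ResidueField R) |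
            (∀ i j, B i j ^ 2 = IsLocalRing.residue R (M i j)) ∧ B.det = 0}.ncard : ℤ) =
        ∏ i : Fin 2, ∏ j : Fin 2,
          (1 + quadraticChar (IsLocalRing.ResidueField R) (IsLocalRing.residue R (M i j)))) := by
  have hF : ringChar (ResidueField R) ≠ 2 := fun h => by
    have := FiniteField.even_card_of_char_two h
    have := Nat.odd_iff.mp hodd
    omega
  set A := M.map (residue R)
  have hA : A.det = 0 :=
    (RingHom.map_det (residue R) M).symm.trans ((residue_eq_zero_iff _).mpr h1)
  have hΞ : {B : Matrix (Fin 2) (Fin 2) (ResidueField R) |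
      (∀ i j, B i j ^ 2 = residue R (M i j)) ∧ B.det = 0} =
        ↑{B ∈ A.entrywiseSqrts | B.det = 0} := by
    ext B
    simp [Matrix.mem_entrywiseSqrts, A]
  have hcard : (#A.entrywiseSqrts : ℤ) =
      ∏ i : Fin 2, ∏ j : Fin 2, (1 + quadraticChar (ResidueField R) (residue R (M i j))) :=
    Matrix.card_entrywiseSqrts hF A
  rw [hΞ, Set.ncard_coe_finset, ← hcard]
  refine ⟨fun hunit => ?_, fun hnunit => ?_⟩
  · have hA0 (i j : Fin 2) : A i j ≠ 0 := (residue_ne_zero_iff_isUnit _).mpr (hunit i j)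
    exact_mod_cast Matrix.two_mul_card_filter_det_eq_zero_entrywiseSqrts hF hA hA0
  · obtain ⟨i, j, hij⟩ : ∃ i j, ¬IsUnit (M i j) := by
      simpa only [not_forall] using hnunit
    have hAij : A i j = 0 := not_ne_iff.mp (mt (residue_ne_zero_iff_isUnit _).mp hij)
    rw [Matrix.filter_det_eq_zero_entrywiseSqrts_of_apply_eq_zero hA hAij]
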